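/- arXiv:2304.05258 — 5 statements merged into one kernel-verified Lean document; each statement's English description precedes it below -/
import Mathlib

section
/- The tetrahedron U = {(V,S,D) : V,S,D ≥ 0, V+S+D ≤ 1} is positively invariant for the system: on each boundary face of U the vector field does not point outward. In particular, on the face V+S+D = 1 with V,S,D ≥ 0 one has V̇ + Ṡ + Ḋ ≤ 0, and on each coordinate face the corresponding component of the vector field is nonnegative (V̇ = 0 when V = 0, Ṡ = 0 when S = 0, and Ḋ ≥ 0 when D = 0 and V, S ≥ 0 with V+S ≤ 1). -/
/-- The tetrahedron U is positively invariant: on the face V+S+D = 1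
the sum of the components of the vector field is ≤ 0, on V = 0 the V-component vanishes,
on S = 0 the S-component vanishes, and on D = 0 (with V,S ≥ 0, V+S ≤ 1) the D-component
is nonnegative. -/
theorem stmt1 (α β γ ε μ η ηD : ℝ)
    (hα : 0 < α) (hβ : 0 < β) (hγ : 0 < γ) (hε : 0 < ε)
    (hμ0 : 0 < μ) (hμ1 : μ < 1) (hη : 1 < η) (hηD : 1 < ηD) :
    (∀ V S D : ℝ, 0 ≤ V → 0 ≤ S → 0 ≤ D → V + S + D = 1 →
      (α * (1 - μ) * V * (1 - V - η * S - ηD * D) - ε * V)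
      + (β * V * S * (1 - V - S - D) - ε * S)
      + ((α * μ + γ * D) * V * (1 - V - S - D) - ε * D) ≤ 0) ∧
    (∀ S D : ℝ, α * (1 - μ) * 0 * (1 - 0 - η * S - ηD * D) - ε * 0 = 0) ∧
    (∀ V D : ℝ, β * V * 0 * (1 - V - 0 - D) - ε * 0 = 0) ∧
    (∀ V S : ℝ, 0 ≤ V → 0 ≤ S → V + S ≤ 1 →
      0 ≤ (α * μ + γ * 0) * V * (1 - V - S - 0) - ε * 0) := by
  refine ⟨fun V S D hV hS hD hsum => ?_, fun S D => by ring, fun V D => by ring,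
    fun V S hV hS hVS => ?_⟩
  · have h1 : 1 - V - S - D = 0 := by linarith
    rw [h1]
    have h2 : 1 - V - η * S - ηD * D = (1 - η) * S + (1 - ηD) * D := by linarith
    rw [h2]
    have : α * (1 - μ) * V * ((1 - η) * S + (1 - ηD) * D) ≤ 0 := by
      apply mul_nonpos_of_nonneg_of_nonpos
      · have h3 : 0 ≤ 1 - μ := by linarith
        positivity
      · nlinarith
    nlinarith
  · have h1 : 0 ≤ 1 - V - S - 0 := by linarith
    have h2 : 0 ≤ α * μ + γ * 0 := by positivity
    have := mul_nonneg (mul_nonneg h2 hV) h1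
    linarith
end

section
/- Let 0 < σ < 1, η_D > 1, α, γ, ε, μ > 0, and q(D) = (αμ + γD)(σ - η_D D)(1 - σ - (η_D - 1)D) - εD. Then q has exactly three real roots: one negative, one in (0, σ/η_D), and one greater than σ/η_D. In particular q has exactly one root in (0, σ/η_D). -/
/-!
Expanding the product, `q` is a cubic with leading coefficient `γ ηD (ηD - 1) > 0`, so it tends
to `-∞` at `-∞` and to `+∞` at `+∞`. Since `q 0 = α μ σ (1 - σ) > 0` and
`q (σ / ηD) = -ε σ / ηD < 0`, the intermediate value theorem gives a root in each of
`(-∞, 0)`, `(0, σ / ηD)` and `(σ / ηD, ∞)`, and a cubic has no further roots.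
-/

open Polynomial Filter Set

namespace Polynomial

section Limits

variable {𝕜 : Type*} [NormedField 𝕜] [LinearOrder 𝕜] [IsStrictOrderedRing 𝕜] [OrderTopology 𝕜]

theorem tendsto_atBot_of_odd_natDegree {P : 𝕜[X]} (hodd : Odd P.natDegree)
    (hlc : 0 < P.leadingCoeff) : Tendsto (fun x ↦ P.eval x) atBot atBot := by
  have hneg : Tendsto (fun x ↦ (P.comp (-X)).eval x) atTop atBot := by
    refine tendsto_atBot_of_leadingCoeff_nonpos _ ?_ ?_
    · rw [degree_eq_natDegree (by simpa using hlc.ne'), natDegree_comp]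
      simpa using hodd.pos
    · simpa [hodd.neg_one_pow] using hlc.le
  simpa [Function.comp_def] using hneg.comp tendsto_neg_atBot_atTop

end Limits

theorem isRoot_iff_of_natDegree_le_three {R : Type*} [CommRing R] [IsDomain R] {p : R[X]}
    (hp : p ≠ 0) (hdeg : p.natDegree ≤ 3) {x y z : R} (hxy : x ≠ y) (hxz : x ≠ z) (hyz : y ≠ z)
    (hx : p.IsRoot x) (hy : p.IsRoot y) (hz : p.IsRoot z) (t : R) :
    p.IsRoot t ↔ t = x ∨ t = y ∨ t = z := by
  classical
  refine ⟨fun ht ↦ ?_, by rintro (rfl | rfl | rfl) <;> assumption⟩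
  by_contra! hne
  have hsub : ({t, x, y, z} : Finset R).val ⊆ p.roots := by
    intro w hw
    simp only [Finset.insert_val, Multiset.mem_ndinsert, Finset.singleton_val,
      Multiset.mem_singleton] at hw
    rw [mem_roots hp]
    rcases hw with rfl | rfl | rfl | rfl <;> assumption
  have hcard : ({t, x, y, z} : Finset R).card = 4 := by
    rw [Finset.card_insert_of_notMem (by simp [hne.1, hne.2.1, hne.2.2]),
      Finset.card_insert_of_notMem (by simp [hxy, hxz]), Finset.card_pair hyz]
  have := card_le_degree_of_subset_roots hsub
  omega

theorem exists_three_roots_of_eval_pos_of_eval_neg {p : ℝ[X]} (hdeg : p.natDegree = 3)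
    (hlc : 0 < p.leadingCoeff) {a b : ℝ} (hab : a < b) (ha : 0 < p.eval a) (hb : p.eval b < 0) :
    ∃ x y z, x < a ∧ y ∈ Ioo a b ∧ b < z ∧ ∀ t, p.IsRoot t ↔ t = x ∨ t = y ∨ t = z := by
  have hcont : Continuous fun t ↦ p.eval t := p.continuous
  obtain ⟨x, hxa, hx⟩ : ∃ x ∈ Iio a, p.eval x = 0 :=
    intermediate_value_Iio hcont.continuousOn
      (tendsto_atBot_of_odd_natDegree (by rw [hdeg]; decide) hlc) ha
  obtain ⟨y, hyab, hy⟩ : ∃ y ∈ Ioo a b, p.eval y = 0 :=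
    intermediate_value_Ioo' hab.le hcont.continuousOn ⟨hb, ha⟩
  obtain ⟨z, hzb, hz⟩ : ∃ z ∈ Ioi b, p.eval z = 0 :=
    intermediate_value_Ioi hcont.continuousOn
      (tendsto_atTop_of_leadingCoeff_nonneg _ (natDegree_pos_iff_degree_pos.1 (by omega))
        hlc.le) hb
  have hxy : x < y := hxa.trans hyab.1
  have hyz : y < z := hyab.2.trans hzb
  exact ⟨x, y, z, hxa, hyab, hzb, isRoot_iff_of_natDegree_le_three (by simpa using hlc.ne')
    hdeg.le hxy.ne (hxy.trans hyz).ne hyz.ne hx hy hz⟩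

end Polynomial

noncomputable def qPoly (α γ ε μ σ ηD : ℝ) : ℝ[X] :=
  (C (α * μ) + C γ * X) * (C σ - C ηD * X) * (C (1 - σ) - C (ηD - 1) * X) - C ε * X

theorem eval_qPoly (α γ ε μ σ ηD D : ℝ) : (qPoly α γ ε μ σ ηD).eval D =
    (α * μ + γ * D) * (σ - ηD * D) * (1 - σ - (ηD - 1) * D) - ε * D := by
  simp [qPoly]

theorem coeff_qPoly_three (α γ ε μ σ ηD : ℝ) :
    (qPoly α γ ε μ σ ηD).coeff 3 = γ * ηD * (ηD - 1) := by
  simp [qPoly, coeff_X, coeff_C, mul_sub, sub_mul, add_mul, coeff_mul_X, coeff_C_mul, mul_assoc]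
  ring

theorem natDegree_qPoly (α γ ε μ σ ηD : ℝ) (h : γ * ηD * (ηD - 1) ≠ 0) :
    (qPoly α γ ε μ σ ηD).natDegree = 3 := by
  refine natDegree_eq_of_le_of_coeff_ne_zero ?_ (by rwa [coeff_qPoly_three])
  unfold qPoly
  compute_degree

/-- q has exactly three real roots: one negative, one in (0, σ/η_D), and
one greater than σ/η_D; in particular exactly one root in (0, σ/η_D). -/
theorem stmt9 (α γ ε μ σ ηD : ℝ)
    (hσ0 : 0 < σ) (hσ1 : σ < 1) (hηD : 1 < ηD)
    (hα : 0 < α) (hγ : 0 < γ) (hε : 0 < ε) (hμ : 0 < μ) :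
    let q : ℝ → ℝ := fun D => (α * μ + γ * D) * (σ - ηD * D) * (1 - σ - (ηD - 1) * D) - ε * D
    (∃ d₁ d₂ d₃ : ℝ, d₁ < 0 ∧ d₂ ∈ Set.Ioo 0 (σ / ηD) ∧ σ / ηD < d₃ ∧
      (∀ D : ℝ, q D = 0 ↔ (D = d₁ ∨ D = d₂ ∨ D = d₃))) ∧
    (∃! D : ℝ, D ∈ Set.Ioo 0 (σ / ηD) ∧ q D = 0) := by
  intro q
  have hlc : 0 < γ * ηD * (ηD - 1) := by have := sub_pos.2 hηD; positivity
  have hdeg := natDegree_qPoly α γ ε μ σ ηD hlc.ne'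
  have hq0 : 0 < q 0 := by
    have := sub_pos.2 hσ1
    simp only [q, mul_zero, add_zero, sub_zero]
    positivity
  have hqs : q (σ / ηD) = -(ε * (σ / ηD)) := by simp only [q]; field_simp; ring
  obtain ⟨d₁, d₂, d₃, h₁, h₂, h₃, hroots⟩ :=
    exists_three_roots_of_eval_pos_of_eval_neg hdeg
      (by rwa [leadingCoeff, hdeg, coeff_qPoly_three]) (by positivity : (0 : ℝ) < σ / ηD)
      (by rwa [eval_qPoly]) (by rw [eval_qPoly]; change q _ < 0; rw [hqs]; exact neg_neg_of_pos (by positivity))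
  simp only [IsRoot.def, eval_qPoly] at hroots
  refine ⟨⟨d₁, d₂, d₃, h₁, h₂, h₃, hroots⟩, d₂, ⟨h₂, (hroots d₂).2 (by simp)⟩, ?_⟩
  rintro D ⟨hD, hqD⟩
  rcases (hroots D).1 hqD with rfl | rfl | rfl
  · exact absurd hD.1 h₁.not_gt
  · rfl
  · exact absurd hD.2 h₃.not_gt
end

section
/- Let Q = (V₂, S₂, D₂) be a coexistence equilibrium (all components positive) of the system with η > 1. Then V₂ satisfies the quadratic V₂² + MV₂ + m = 0, where M = (σ - (η_D - η)D₂ - η)/(η - 1), m = ηε/(β(η-1)), σ = 1 - ε/(α(1-μ)), and D₂ = αμ/(β-γ). -/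
/-!
At a coexistence equilibrium each equation can be divided by its own (nonzero) variable. The
`S`-equation gives `V (1 - V - S - D) = ε / β`; substituting this into the `D`-equation pins down
`D = α μ / (β - γ)`, and the `V`-equation gives the linear relation `V + η S + η_D D = σ`.
Eliminating `η S` between the linear relation and `η V (1 - V - S - D) = η ε / β` leaves a quadratic
in `V` whose leading coefficient is `1 - η`.
-/

theorem add_add_eq_of_V_equilibrium {α ε μ η ηD V S D : ℝ} (hα : α ≠ 0) (hμ : μ ≠ 1) (hV : V ≠ 0)
    (h : α * (1 - μ) * V * (1 - V - η * S - ηD * D) - ε * V = 0) :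
    V + η * S + ηD * D = 1 - ε / (α * (1 - μ)) := by
  have hαμ : α * (1 - μ) ≠ 0 := mul_ne_zero hα (sub_ne_zero.mpr hμ.symm)
  have hrate : α * (1 - μ) * (1 - V - η * S - ηD * D) = ε :=
    mul_right_cancel₀ hV (by linear_combination h)
  rw [← hrate, mul_div_cancel_left₀ _ hαμ]
  ring

theorem mul_mul_one_sub_eq_of_S_equilibrium {β ε V S D : ℝ} (hS : S ≠ 0)
    (h : β * V * S * (1 - V - S - D) - ε * S = 0) :
    β * (V * (1 - V - S - D)) = ε :=
  mul_right_cancel₀ hS (by linear_combination h)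

theorem D_eq_of_D_equilibrium {α β γ ε μ V S D : ℝ} (hε : ε ≠ 0) (hβγ : β ≠ γ)
    (hS : β * (V * (1 - V - S - D)) = ε)
    (h : (α * μ + γ * D) * V * (1 - V - S - D) - ε * D = 0) :
    D = α * μ / (β - γ) := by
  have hbalance : α * μ + γ * D = β * D :=
    mul_right_cancel₀ hε (by linear_combination -(α * μ + γ * D) * hS + β * h)
  rw [eq_div_iff (sub_ne_zero.mpr hβγ)]
  linear_combination -hbalance

theorem quadratic_eq_zero_of_eliminate_S {β ε η ηD σ V S D : ℝ} (hβ : β ≠ 0) (hη : η ≠ 1)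
    (hlin : V + η * S + ηD * D = σ) (hS : β * (V * (1 - V - S - D)) = ε) :
    V ^ 2 + (σ - (ηD - η) * D - η) / (η - 1) * V + η * ε / (β * (η - 1)) = 0 := by
  have hη1 : η - 1 ≠ 0 := sub_ne_zero.mpr hη
  have hcleared : β * (η - 1) * V ^ 2 + β * (σ - (ηD - η) * D - η) * V + η * ε = 0 := by
    linear_combination -β * V * hlin - η * hS
  field_simp
  linear_combination hcleared

theorem stmt14_general (α β γ ε μ η ηD : ℝ)
    (hα : 0 < α) (hβ : 0 < β) (hε : 0 < ε)
    (hμ1 : μ < 1) (hη : 1 < η) (hβγ : β > γ)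
    (V S D : ℝ) (hV : 0 < V) (hS : 0 < S)
    (h1 : α * (1 - μ) * V * (1 - V - η * S - ηD * D) - ε * V = 0)
    (h2 : β * V * S * (1 - V - S - D) - ε * S = 0)
    (h3 : (α * μ + γ * D) * V * (1 - V - S - D) - ε * D = 0) :
    let σ : ℝ := 1 - ε / (α * (1 - μ))
    let D₂ : ℝ := α * μ / (β - γ)
    let M : ℝ := (σ - (ηD - η) * D₂ - η) / (η - 1)
    let m : ℝ := η * ε / (β * (η - 1))
    V ^ 2 + M * V + m = 0 := by
  intro σ D₂ M m
  have hlin : V + η * S + ηD * D = σ :=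
    add_add_eq_of_V_equilibrium hα.ne' hμ1.ne hV.ne' h1
  have hgrowth : β * (V * (1 - V - S - D)) = ε :=
    mul_mul_one_sub_eq_of_S_equilibrium hS.ne' h2
  have hD : D = D₂ := D_eq_of_D_equilibrium hε.ne' hβγ.ne' hgrowth h3
  have hquad := quadratic_eq_zero_of_eliminate_S hβ.ne' hη.ne' hlin hgrowth
  rwa [hD] at hquad

/-- At a coexistence equilibrium with η > 1, V₂ satisfies
V₂² + MV₂ + m = 0 with M = (σ - (η_D - η)D₂ - η)/(η-1), m = ηε/(β(η-1)),
σ = 1 - ε/(α(1-μ)), D₂ = αμ/(β-γ). -/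
theorem stmt14 (α β γ ε μ η ηD : ℝ)
    (hα : 0 < α) (hβ : 0 < β) (hγ : 0 < γ) (hε : 0 < ε)
    (hμ0 : 0 < μ) (hμ1 : μ < 1) (hη : 1 < η) (hηD : 1 < ηD) (hβγ : β > γ)
    (V S D : ℝ) (hV : 0 < V) (hS : 0 < S) (hD : 0 < D)
    (h1 : α * (1 - μ) * V * (1 - V - η * S - ηD * D) - ε * V = 0)
    (h2 : β * V * S * (1 - V - S - D) - ε * S = 0)
    (h3 : (α * μ + γ * D) * V * (1 - V - S - D) - ε * D = 0) :
    let σ : ℝ := 1 - ε / (α * (1 - μ))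
    let D₂ : ℝ := α * μ / (β - γ)
    let M : ℝ := (σ - (ηD - η) * D₂ - η) / (η - 1)
    let m : ℝ := η * ε / (β * (η - 1))
    V ^ 2 + M * V + m = 0 :=
  stmt14_general α β γ ε μ η ηD hα hβ hε hμ1 hη hβγ V S D hV hS h1 h2 h3
end

section
/- If γ ≥ β, then the system admits no equilibrium point with all three components strictly positive. -/
/-- If γ ≥ β, the system admits no equilibrium with all three
components strictly positive. -/
theorem stmt16 (α β γ ε μ η ηD : ℝ)
    (hα : 0 < α) (hβ : 0 < β) (hγ : 0 < γ) (hε : 0 < ε) (hμ : 0 < μ)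
    (hγβ : γ ≥ β) :
    ¬ ∃ V S D : ℝ, 0 < V ∧ 0 < S ∧ 0 < D ∧
      α * (1 - μ) * V * (1 - V - η * S - ηD * D) - ε * V = 0 ∧
      β * V * S * (1 - V - S - D) - ε * S = 0 ∧
      (α * μ + γ * D) * V * (1 - V - S - D) - ε * D = 0 := by
  rintro ⟨V, S, D, hV, hS, hD, _, h2, h3⟩
  set W := V * (1 - V - S - D) with hW
  have hβW : β * W = ε := by
    have : S * (β * W - ε) = 0 := by ring_nf; ring_nf at h2; linarith
    rcases mul_eq_zero.mp this with h | h
    · exact absurd h (ne_of_gt hS)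
    · linarith
  have h3' : (α * μ + γ * D) * W = ε * D := by ring_nf; ring_nf at h3; linarith
  -- multiply h3' by β and use βW = ε
  have key : (α * μ + γ * D) * ε = β * (ε * D) := by
    calc (α * μ + γ * D) * ε = (α * μ + γ * D) * (β * W) := by rw [hβW]
    _ = β * ((α * μ + γ * D) * W) := by ring
    _ = β * (ε * D) := by rw [h3']
  nlinarith [mul_pos hα hμ, mul_pos hε hD, mul_pos (mul_pos hα hμ) hε]
end

section
/- Assume 0 < μ < 1 and α, β, γ, ε > 0 with β > γ, η, η_D > 1, and σ = 1 - ε/(α(1-μ)) ∈ (0,1). Let D₂ = αμ/(β-γ), M = (σ - (η_D-η)D₂ - η)/(η-1), m = ηε/(β(η-1)). If V₂ > 0 satisfies V₂² + MV₂ + m = 0, and S₂ := 1 - V₂ - D₂ - ε/(βV₂) > 0, and V₂ + S₂ + D₂ ≤ 1, then (V₂, S₂, D₂) is an equilibrium point of the system. -/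
/-! With `S₂ = 1 - V₂ - D₂ - ε/(βV₂)` the free space `1 - V₂ - S₂ - D₂` equals `ε/(βV₂)`, which
balances the `S` equation at once, and balances the `D` equation because `D₂ = αμ/(β - γ)` means
`αμ + γD₂ = βD₂`. Dividing the `V` equation by `α(1 - μ)` leaves `σ - V₂ - ηS₂ - η_D D₂ = 0`,
and multiplied by `V₂` this is `(η - 1)(V₂² + MV₂ + m) = 0`. -/

theorem mul_mul_div_mul_sub_eq_zero (β ε V S : ℝ) (hβ : β ≠ 0) (hV : V ≠ 0) :
    β * V * S * (ε / (β * V)) - ε * S = 0 := by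
  field_simp; ring

theorem add_mul_eq_mul_of_eq_div (a β γ : ℝ) (hβγ : β ≠ γ) :
    a + γ * (a / (β - γ)) = β * (a / (β - γ)) := by
  have : β - γ ≠ 0 := sub_ne_zero.mpr hβγ
  field_simp; ring

theorem mul_sub_sub_eq_mul_sub_div (k ε V Y Z : ℝ) (hk : k ≠ 0) :
    k * V * (1 - V - Y - Z) - ε * V = k * (V * (1 - ε / k - V - Y - Z)) := by
  field_simp; ring

theorem mul_sub_eq_mul_quadratic (σ β ε η ηD D V S : ℝ) (hβ : β ≠ 0) (hV : V ≠ 0) (hη : η ≠ 1)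
    (hS : S = 1 - V - D - ε / (β * V)) :
    V * (σ - V - η * S - ηD * D) =
      (η - 1) * (V ^ 2 + (σ - (ηD - η) * D - η) / (η - 1) * V + η * ε / (β * (η - 1))) := by
  have : η - 1 ≠ 0 := sub_ne_zero.mpr hη
  rw [hS]; field_simp; ring

theorem stmt18_general (α β γ ε μ η ηD : ℝ)
    (hα : 0 < α) (hβ : 0 < β) (hμ1 : μ < 1) (hη : 1 < η) (hβγ : β > γ)
    (V₂ : ℝ) (hV : 0 < V₂) :
    let σ : ℝ := 1 - ε / (α * (1 - μ))
    let D₂ : ℝ := α * μ / (β - γ)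
    let M : ℝ := (σ - (ηD - η) * D₂ - η) / (η - 1)
    let m : ℝ := η * ε / (β * (η - 1))
    let S₂ : ℝ := 1 - V₂ - D₂ - ε / (β * V₂)
    V₂ ^ 2 + M * V₂ + m = 0 → 0 < S₂ → V₂ + S₂ + D₂ ≤ 1 →
      (α * (1 - μ) * V₂ * (1 - V₂ - η * S₂ - ηD * D₂) - ε * V₂ = 0 ∧
       β * V₂ * S₂ * (1 - V₂ - S₂ - D₂) - ε * S₂ = 0 ∧
       (α * μ + γ * D₂) * V₂ * (1 - V₂ - S₂ - D₂) - ε * D₂ = 0) := by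
  intro σ D₂ M m S₂ hquad _ _
  have hk : α * (1 - μ) ≠ 0 := (mul_pos hα (sub_pos.mpr hμ1)).ne'
  have hfree : 1 - V₂ - S₂ - D₂ = ε / (β * V₂) := by
    show 1 - V₂ - (1 - V₂ - D₂ - ε / (β * V₂)) - D₂ = _
    ring
  refine ⟨?_, ?_, ?_⟩
  · have hσ : V₂ * (σ - V₂ - η * S₂ - ηD * D₂) = (η - 1) * (V₂ ^ 2 + M * V₂ + m) :=
      mul_sub_eq_mul_quadratic σ β ε η ηD D₂ V₂ S₂ hβ.ne' hV.ne' hη.ne' rfl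
    rw [mul_sub_sub_eq_mul_sub_div _ _ _ _ _ hk, hσ, hquad, mul_zero, mul_zero]
  · rw [hfree]
    exact mul_mul_div_mul_sub_eq_zero β ε V₂ S₂ hβ.ne' hV.ne'
  · rw [hfree, add_mul_eq_mul_of_eq_div (α * μ) β γ hβγ.ne', mul_right_comm β _ V₂]
    exact mul_mul_div_mul_sub_eq_zero β ε V₂ D₂ hβ.ne' hV.ne'

/-- Sufficiency of the algebraic conditions: if V₂ > 0 solves
V₂² + MV₂ + m = 0, S₂ := 1 - V₂ - D₂ - ε/(βV₂) > 0 and V₂ + S₂ + D₂ ≤ 1, then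
(V₂, S₂, D₂) is an equilibrium of the system. -/
theorem stmt18 (α β γ ε μ η ηD : ℝ)
    (hα : 0 < α) (hβ : 0 < β) (hγ : 0 < γ) (hε : 0 < ε)
    (hμ0 : 0 < μ) (hμ1 : μ < 1) (hη : 1 < η) (hηD : 1 < ηD) (hβγ : β > γ)
    (hσ0 : 0 < 1 - ε / (α * (1 - μ))) (hσ1 : 1 - ε / (α * (1 - μ)) < 1)
    (V₂ : ℝ) (hV : 0 < V₂) :
    let σ : ℝ := 1 - ε / (α * (1 - μ))
    let D₂ : ℝ := α * μ / (β - γ)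
    let M : ℝ := (σ - (ηD - η) * D₂ - η) / (η - 1)
    let m : ℝ := η * ε / (β * (η - 1))
    let S₂ : ℝ := 1 - V₂ - D₂ - ε / (β * V₂)
    V₂ ^ 2 + M * V₂ + m = 0 → 0 < S₂ → V₂ + S₂ + D₂ ≤ 1 →
      (α * (1 - μ) * V₂ * (1 - V₂ - η * S₂ - ηD * D₂) - ε * V₂ = 0 ∧
       β * V₂ * S₂ * (1 - V₂ - S₂ - D₂) - ε * S₂ = 0 ∧
       (α * μ + γ * D₂) * V₂ * (1 - V₂ - S₂ - D₂) - ε * D₂ = 0) :=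
  stmt18_general α β γ ε μ η ηD hα hβ hμ1 hη hβγ V₂ hV
end
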